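/- Let p be an odd prime, q = p^r, and t > 4. The number of equivalence classes of the family of 𝔽_q-subspaces {U_h : h ∈ 𝔽_{q^n}, h^{q^t+1} = −1} of 𝔽_{q^n}² under ΓL(2,q^n)-equivalence is at least ⌊(q^t+1)/(4rt)⌋ if t ≢ 2 (mod 4), and at least ⌊(q^t+1)/(2rt(q²+1))⌋ if t ≡ 2 (mod 4). -/

import Mathlib

/-- The `q`-polynomial map `ψ_{h,t}(x) = x^q + x^{q^{t-1}} - h^{1-q^{t+1}} x^{q^{t+1}}
    + h^{1-q^{2t-1}} x^{q^{2t-1}}`, where `h^{1-q^j}` means `h / h^{q^j}`. -/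
def psiMap {F : Type*} [Field F] (q t : ℕ) (h : F) (x : F) : F :=
  x ^ q + x ^ q ^ (t - 1) - h / h ^ q ^ (t + 1) * x ^ q ^ (t + 1)
    + h / h ^ q ^ (2 * t - 1) * x ^ q ^ (2 * t - 1)

/-- The subspace `U_h = {(x, ψ_{h,t}(x)) : x ∈ 𝔽_{q^n}}`, as a set of column vectors. -/
def Uspace {F : Type*} [Field F] (q t : ℕ) (h : F) : Set (Fin 2 → F) :=
  {w | ∃ x : F, w = ![x, psiMap q t h x]}

/-- `U, W ⊆ 𝔽_{q^n}²` are `ΓL(2,q^n)`-equivalent: for some field automorphism `ρ` and some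
invertible matrix `A`, `A · ρ(U) = W`. -/
def GammaLEquiv {F : Type*} [Field F] (U W : Set (Fin 2 → F)) : Prop :=
  ∃ ρ : F ≃+* F, ∃ A : Matrix (Fin 2) (Fin 2) F, IsUnit A ∧
    (fun w => A.mulVec (fun i => ρ (w i))) '' U = W

/-!
Suppose `A · ρ(U_h) = U_k` and put `h' = ρ h`. Then `c y + d ψ_{h'}(y) = ψ_k(a y + b ψ_{h'}(y))`
for all `y`. Both sides are `q`-polynomials of degree `< q^n`, so after reducing exponents modulo
`n` the coefficients of the ten monomials `y^{q^i}` that occur must vanish. Whether `a = 0` (and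
then `d = 0`, `b ≠ 0`) or not, these equations force `w = k / h'` to satisfy `w^{q^{t-2}} = w`,
while `w^{q^t+1} = 1` because `h'` and `k` both have norm `-1`. Thus `w^2 = 1` if `t ≢ 2 (mod 4)`
(since `gcd(t - 2, 2t) ∣ t`) and `w^{q^2+1} = 1` otherwise. So every member equivalent to `U_h`
has the form `U_{w ρ(h)}` with at most `2` resp. `q^2 + 1` choices of `w` and at most `2rt`
conjugates `ρ(h)`; since exactly `q^t + 1` elements have norm `-1`, picking representatives
greedily gives the bound.
-/

open Finset Polynomial

section Frobenius

variable {R : Type*} [CommRing R] {p q r : ℕ} [ExpChar R p]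

theorem add_pow_qpow (hq : q = p ^ r) (x y : R) (s : ℕ) :
    (x + y) ^ q ^ s = x ^ q ^ s + y ^ q ^ s := by
  rw [hq, ← pow_mul, add_pow_expChar_pow]

theorem sub_pow_qpow (hq : q = p ^ r) (x y : R) (s : ℕ) :
    (x - y) ^ q ^ s = x ^ q ^ s - y ^ q ^ s := by
  rw [hq, ← pow_mul, sub_pow_expChar_pow]

theorem neg_pow_qpow (hq : q = p ^ r) (x : R) (s : ℕ) : (-x) ^ q ^ s = -x ^ q ^ s := by
  rw [neg_eq_neg_one_mul, mul_pow, hq, ← pow_mul, neg_one_pow_expChar_pow, neg_one_mul]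

theorem qpow_injective [IsReduced R] (hq : q = p ^ r) (s : ℕ) :
    Function.Injective fun x : R => x ^ q ^ s := fun x y hxy =>
  iterateFrobenius_inj R p (r * s) (by simpa [iterateFrobenius_def, hq, pow_mul] using hxy)

end Frobenius

theorem qpow_qpow {M : Type*} [Monoid M] (q : ℕ) (x : M) (e s : ℕ) :
    (x ^ q ^ e) ^ q ^ s = x ^ q ^ (e + s) := by
  rw [← pow_mul, ← pow_add]

section FiniteField

variable {F : Type*} [Field F] [Fintype F]

theorem qpow_add_of_card {q n : ℕ} (hcard : Fintype.card F = q ^ n) (x : F) (s : ℕ) :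
    x ^ q ^ (n + s) = x ^ q ^ s := by
  rw [pow_add, pow_mul, ← hcard, FiniteField.pow_card]

theorem eq_zero_of_forall_sum_mul_pow_qpow_eq_zero {ι : Type*} [Fintype ι] {q n : ℕ}
    (hq : 1 < q) (hcard : Fintype.card F = q ^ n) {e : ι → ℕ} (he : Function.Injective e)
    (hlt : ∀ i, e i < n) {c : ι → F} (hc : ∀ x : F, ∑ i, c i * x ^ q ^ e i = 0) (i : ι) :
    c i = 0 := by
  classical
  set P : F[X] := ∑ j, C (c j) * X ^ q ^ e j
  have hdeg : P.natDegree < Fintype.card F := by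
    refine (natDegree_sum_le_of_forall_le _ _ fun j _ => ?_).trans_lt
      (hcard ▸ Nat.pow_lt_pow_right hq (Nat.sub_one_lt_of_lt (hlt i)))
    exact (natDegree_C_mul_X_pow_le _ _).trans
      (Nat.pow_le_pow_right (by omega) (Nat.le_sub_one_of_lt (hlt j)))
  have hP : P = 0 := eq_zero_of_natDegree_lt_card_of_eval_eq_zero P Function.injective_id
    (fun x => by simpa [P, eval_finsetSum] using hc x) (by simpa using hdeg)
  have hcoeff : P.coeff (q ^ e i) = c i := by
    simp only [P, finsetSum_coeff, coeff_C_mul_X_pow]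
    rw [Finset.sum_eq_single i (fun j _ hji => if_neg fun h =>
      hji (he (Nat.pow_right_injective hq h)).symm) (by simp), if_pos rfl]
  rw [← hcoeff, hP, coeff_zero]

theorem exists_isPrimitiveRoot_of_dvd {k : ℕ} (hk : k ∣ Fintype.card F - 1) :
    ∃ ζ : F, IsPrimitiveRoot ζ k := by
  classical
  obtain ⟨g, hg⟩ := IsCyclic.exists_ofOrder_eq_natCard (α := Fˣ)
  have hN : Fintype.card F - 1 ≠ 0 := by have := Fintype.one_lt_card (α := F); omega
  have hgN : IsPrimitiveRoot (g : F) (Fintype.card F - 1) := by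
    rw [IsPrimitiveRoot.coe_units_iff, IsPrimitiveRoot.iff_orderOf, hg, Nat.card_eq_fintype_card,
      Fintype.card_units]
  obtain ⟨c, hc⟩ := hk
  refine ⟨(g : F) ^ c, ?_⟩
  have hc0 : c ≠ 0 := by rintro rfl; simp_all
  simpa [hc, Nat.mul_div_cancel _ (Nat.pos_of_ne_zero hc0)] using
    hgN.pow_of_dvd hc0 (hc ▸ dvd_mul_left c k)

theorem card_nthRootsFinset_neg_one {m : ℕ} (hm : 2 * m ∣ Fintype.card F - 1) :
    #(nthRootsFinset m (-1 : F)) = m := by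
  classical
  rcases Nat.eq_zero_or_pos m with rfl | hm0
  · simp
  obtain ⟨ζ, hζ⟩ := exists_isPrimitiveRoot_of_dvd hm
  have hζ2 : IsPrimitiveRoot (ζ ^ 2) m := by
    simpa using hζ.pow_of_dvd two_ne_zero (dvd_mul_right 2 m)
  have hζm : ζ ^ m = -1 := by
    refine IsPrimitiveRoot.eq_neg_one_of_two_right ?_
    simpa [Nat.mul_div_cancel _ hm0] using hζ.pow_of_dvd hm0.ne' (dvd_mul_left m 2)
  rw [nthRootsFinset_def, Multiset.toFinset_card_of_nodup (hζ2.nthRoots_nodup (by simp)),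
    hζ2.card_nthRoots, if_pos ⟨ζ, hζm⟩]

open Classical in
theorem card_ringEquiv_orbit_le {p n : ℕ} [Fact p.Prime] (hcard : Fintype.card F = p ^ n)
    (x : F) :
    #{y | ∃ ρ : F ≃+* F, ρ x = y} ≤ n := by
  have := charP_of_card_eq_prime_pow hcard
  let _ := ZMod.algebra F p
  have hfinrank : Module.finrank (ZMod p) F = n := by
    have h := (Module.card_eq_pow_finrank (K := ZMod p) (V := F)).symm.trans hcard
    rw [ZMod.card] at h
    exact Nat.pow_right_injective (Fact.out : p.Prime).two_le h
  have hroot : ∀ ρ : F ≃+* F, ρ x ∈ ((minpoly (ZMod p) x).aroots F).toFinset := fun ρ => by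
    let ρ' : F ≃ₐ[ZMod p] F :=
      AlgEquiv.ofRingEquiv (f := ρ) fun z =>
        RingHom.congr_fun (RingHom.ext_zmod (ρ.toRingHom.comp (algebraMap (ZMod p) F)) _) z
    rw [Multiset.mem_toFinset, mem_aroots]
    exact ⟨minpoly.ne_zero (IsIntegral.of_finite _ x), minpoly.aeval_algHom _ ρ'.toAlgHom x⟩
  calc #{y | ∃ ρ : F ≃+* F, ρ x = y}
      ≤ #((minpoly (ZMod p) x).aroots F).toFinset :=
        card_le_card fun y hy => by
          obtain ⟨ρ, rfl⟩ := (mem_filter.mp hy).2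
          exact hroot ρ
    _ ≤ n := (Multiset.toFinset_card_le _).trans <| (card_roots' _).trans <|
        natDegree_map_le.trans (hfinrank ▸ minpoly.natDegree_le x)

end FiniteField

theorem exists_pairwise_not_rel_of_card_nbhd_le {α : Type*} [DecidableEq α]
    (R : α → α → Prop) (N : α → Finset α) {M : ℕ} (H : Finset α)
    (hN : ∀ h ∈ H, ∀ k ∈ H, R h k ∨ R k h ∨ k = h → k ∈ N h)
    (hNM : ∀ h ∈ H, #(N h) ≤ M) :
    ∃ S ⊆ H, (∀ h ∈ S, ∀ k ∈ S, h ≠ k → ¬R h k) ∧ #H / M ≤ #S := by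
  rcases Nat.eq_zero_or_pos M with rfl | hM
  · exact ⟨∅, empty_subset H, by simp⟩
  induction H using Finset.strongInduction with
  | H H ih =>
  rcases H.eq_empty_or_nonempty with rfl | ⟨h, hh⟩
  · exact ⟨∅, by simp⟩
  have hhN : h ∈ N h := hN h hh h hh (.inr (.inr rfl))
  have hsub : H \ N h ⊂ H := (ssubset_iff_of_subset sdiff_subset).mpr
    ⟨h, hh, fun h' => (mem_sdiff.mp h').2 hhN⟩
  obtain ⟨S, hSH, hS, hcard⟩ := ih _ hsub
    (fun a ha b hb => hN a (mem_sdiff.mp ha).1 b (mem_sdiff.mp hb).1)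
    (fun a ha => hNM a (mem_sdiff.mp ha).1)
  have hS' : ∀ z ∈ S, z ∈ H ∧ z ∉ N h := fun z hz => mem_sdiff.mp (hSH hz)
  have hhS : h ∉ S := fun hS => (hS' h hS).2 hhN
  refine ⟨insert h S, insert_subset hh (hSH.trans sdiff_subset), ?_, ?_⟩
  · intro x hx y hy hxy
    rcases mem_insert.mp hx with rfl | hxS <;> rcases mem_insert.mp hy with rfl | hyS
    · exact absurd rfl hxy
    · exact fun hR => (hS' y hyS).2 (hN x hh y (hS' y hyS).1 (.inl hR))
    · exact fun hR => (hS' x hxS).2 (hN y hh x (hS' x hxS).1 (.inr (.inl hR)))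
    · exact hS x hxS y hyS hxy
  · have hH : #H ≤ #(H \ N h) + M :=
      (card_le_card_sdiff_add_card).trans (Nat.add_le_add_left (hNM h hh) _)
    calc #H / M ≤ #(H \ N h) / M + 1 := by
          simpa [Nat.add_div_right _ hM] using Nat.div_le_div_right (c := M) hH
      _ ≤ #(insert h S) := by rw [card_insert_of_notMem hhS]; omega

-- The paper's `h ^ (1 - q ^ j)`.
def powOneSub {F : Type*} [Field F] (q j : ℕ) (h : F) : F := h / h ^ q ^ j

section PsiMap

variable {F : Type*} [Field F]

-- Writing `t = m + 2` makes the exponents `t - 1`, `t + 1`, `2t - 1` of `ψ_{h,t}`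
-- subtraction-free.
theorem psiMap_add_two (q m : ℕ) (h x : F) :
    psiMap q (m + 2) h x = x ^ q + x ^ q ^ (m + 1) - powOneSub q (m + 3) h * x ^ q ^ (m + 3)
      + powOneSub q (2 * m + 3) h * x ^ q ^ (2 * m + 3) := by
  rw [psiMap, powOneSub, powOneSub, show m + 2 - 1 = m + 1 by omega,
    show 2 * (m + 2) - 1 = 2 * m + 3 by omega]

theorem map_psiMap (ρ : F ≃+* F) (q t : ℕ) (h x : F) :
    ρ (psiMap q t h x) = psiMap q t (ρ h) (ρ x) := by
  simp only [psiMap, map_add, map_sub, map_mul, map_div₀, map_pow]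

theorem exists_psiMap_comp_of_gammaLEquiv {q t : ℕ} {h k : F}
    (heq : GammaLEquiv (Uspace q t h) (Uspace q t k)) :
    ∃ (ρ : F ≃+* F) (A : Matrix (Fin 2) (Fin 2) F), IsUnit A ∧ ∀ y,
      A 1 0 * y + A 1 1 * psiMap q t (ρ h) y =
        psiMap q t k (A 0 0 * y + A 0 1 * psiMap q t (ρ h) y) := by
  obtain ⟨ρ, A, hA, himg⟩ := heq
  refine ⟨ρ, A, hA, fun y => ?_⟩
  obtain ⟨z, hz⟩ : A.mulVec ![y, psiMap q t (ρ h) y] ∈ Uspace q t k := by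
    rw [← himg]
    refine ⟨_, ⟨ρ.symm y, rfl⟩, ?_⟩
    simp [map_psiMap]
  have h0 := congrFun hz 0
  have h1 := congrFun hz 1
  simp only [Matrix.mulVec, dotProduct, Fin.sum_univ_two, Matrix.cons_val_zero,
    Matrix.cons_val_one] at h0 h1
  rw [h1, h0]

end PsiMap

section Core

variable {F : Type*} [Field F] {p q r m : ℕ} [Fact p.Prime] [CharP F p]

theorem qpow_linearized (hq : q = p ^ r) (a b A B y : F) (e₁ e₂ e₃ e₄ s : ℕ) :
    (a * y + b * (y ^ q ^ e₁ + y ^ q ^ e₂ - A * y ^ q ^ e₃ + B * y ^ q ^ e₄)) ^ q ^ s =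
      a ^ q ^ s * y ^ q ^ s + b ^ q ^ s * (y ^ q ^ (e₁ + s) + y ^ q ^ (e₂ + s)
        - A ^ q ^ s * y ^ q ^ (e₃ + s) + B ^ q ^ s * y ^ q ^ (e₄ + s)) := by
  simp only [add_pow_qpow hq, sub_pow_qpow hq, mul_pow, qpow_qpow]

theorem coeff_eqs_of_psiMap_comp [Fintype F] (hq : q = p ^ r)
    (hcard : Fintype.card F = q ^ (2 * m + 4)) (hm : 2 < m) {a b c d h k : F}
    (hfe : ∀ y, c * y + d * psiMap q (m + 2) h y =
      psiMap q (m + 2) k (a * y + b * psiMap q (m + 2) h y)) :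
    a ^ q = d ∧ a ^ q ^ (m + 1) = d ∧
      powOneSub q (m + 3) k * a ^ q ^ (m + 3) = d * powOneSub q (m + 3) h ∧
      powOneSub q (2 * m + 3) k * a ^ q ^ (2 * m + 3) = d * powOneSub q (2 * m + 3) h ∧
      b ^ q + powOneSub q (m + 3) k * (b * powOneSub q (m + 3) h) ^ q ^ (m + 3) = 0 ∧
      b ^ q ^ (m + 1) +
        powOneSub q (2 * m + 3) k * (b * powOneSub q (2 * m + 3) h) ^ q ^ (2 * m + 3) = 0 := by
  have hq1 : 1 < q := (Nat.one_lt_pow_iff (by omega)).mp (hcard ▸ Fintype.one_lt_card)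
  set A := powOneSub q (m + 3) h
  set B := powOneSub q (2 * m + 3) h
  set α := powOneSub q (m + 3) k
  set β := powOneSub q (2 * m + 3) k
  set e : Fin 10 → ℕ := ![0, 1, 2, m, m + 1, m + 2, m + 3, m + 4, 2 * m + 2, 2 * m + 3]
  have he : StrictMono e := Fin.strictMono_iff_lt_succ.2 fun i => by
    fin_cases i <;> simp [e] <;> omega
  have hlt : ∀ i, e i < 2 * m + 4 := fun i => by fin_cases i <;> simp [e] <;> omega
  -- `C i` is the coefficient of `y ^ q ^ e i` in `ψ_k(a y + b ψ_h(y)) - c y - d ψ_h(y)` once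
  -- exponents are reduced modulo `2 * m + 4`.
  set C : Fin 10 → F := ![(b * B) ^ q - (b * A) ^ q ^ (m + 1) - α * b ^ q ^ (m + 3)
      + β * b ^ q ^ (2 * m + 3) - c,
    a ^ q - d,
    b ^ q + α * (b * A) ^ q ^ (m + 3),
    (b * B) ^ q ^ (m + 1) + β * b ^ q ^ (2 * m + 3),
    a ^ q ^ (m + 1) - d,
    b ^ q + b ^ q ^ (m + 1) - α * (b * B) ^ q ^ (m + 3) - β * (b * A) ^ q ^ (2 * m + 3),
    d * A - α * a ^ q ^ (m + 3),
    -(b * A) ^ q - α * b ^ q ^ (m + 3),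
    b ^ q ^ (m + 1) + β * (b * B) ^ q ^ (2 * m + 3),
    β * a ^ q ^ (2 * m + 3) - d * B]
  have hC : ∀ y : F, ∑ i, C i * y ^ q ^ e i = 0 := fun y => by
    have hy := hfe y
    simp only [psiMap_add_two] at hy
    have r := qpow_add_of_card hcard y
    set Z := a * y + b * (y ^ q + y ^ q ^ (m + 1) - A * y ^ q ^ (m + 3)
      + B * y ^ q ^ (2 * m + 3))
    have Z₁ : Z ^ q = a ^ q * y ^ q
        + b ^ q * (y ^ q ^ 2 + y ^ q ^ (m + 2) - A ^ q * y ^ q ^ (m + 4) + B ^ q * y) := by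
      linear_combination qpow_linearized hq a b A B y 1 (m + 1) (m + 3) (2 * m + 3) 1
        + b ^ q * B ^ q * r 0
    have Z₂ : Z ^ q ^ (m + 1) = a ^ q ^ (m + 1) * y ^ q ^ (m + 1) + b ^ q ^ (m + 1) *
        (y ^ q ^ (m + 2) + y ^ q ^ (2 * m + 2) - A ^ q ^ (m + 1) * y
          + B ^ q ^ (m + 1) * y ^ q ^ m) := by
      linear_combination qpow_linearized hq a b A B y 1 (m + 1) (m + 3) (2 * m + 3) (m + 1)
        - b ^ q ^ (m + 1) * A ^ q ^ (m + 1) * r 0 + b ^ q ^ (m + 1) * B ^ q ^ (m + 1) * r m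
    have Z₃ : Z ^ q ^ (m + 3) = a ^ q ^ (m + 3) * y ^ q ^ (m + 3) + b ^ q ^ (m + 3) *
        (y ^ q ^ (m + 4) + y - A ^ q ^ (m + 3) * y ^ q ^ 2
          + B ^ q ^ (m + 3) * y ^ q ^ (m + 2)) := by
      linear_combination qpow_linearized hq a b A B y 1 (m + 1) (m + 3) (2 * m + 3) (m + 3)
        + b ^ q ^ (m + 3) * r 0 - b ^ q ^ (m + 3) * A ^ q ^ (m + 3) * r 2
        + b ^ q ^ (m + 3) * B ^ q ^ (m + 3) * r (m + 2)
    have Z₄ : Z ^ q ^ (2 * m + 3) = a ^ q ^ (2 * m + 3) * y ^ q ^ (2 * m + 3)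
        + b ^ q ^ (2 * m + 3) * (y + y ^ q ^ m - A ^ q ^ (2 * m + 3) * y ^ q ^ (m + 2)
          + B ^ q ^ (2 * m + 3) * y ^ q ^ (2 * m + 2)) := by
      linear_combination qpow_linearized hq a b A B y 1 (m + 1) (m + 3) (2 * m + 3) (2 * m + 3)
        + b ^ q ^ (2 * m + 3) * r 0 + b ^ q ^ (2 * m + 3) * r m
        - b ^ q ^ (2 * m + 3) * A ^ q ^ (2 * m + 3) * r (m + 2)
        + b ^ q ^ (2 * m + 3) * B ^ q ^ (2 * m + 3) * r (2 * m + 2)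
    simp only [Fin.sum_univ_succ, Fin.sum_univ_zero, C, e, Matrix.cons_val_zero,
      Matrix.cons_val_succ]
    linear_combination -hy - Z₁ - Z₂ + α * Z₃ - β * Z₄
  have h0 := eq_zero_of_forall_sum_mul_pow_qpow_eq_zero hq1 hcard he.injective hlt hC
  exact ⟨sub_eq_zero.mp (h0 1), sub_eq_zero.mp (h0 4), (sub_eq_zero.mp (h0 6)).symm,
    sub_eq_zero.mp (h0 9), h0 2, h0 8⟩

theorem div_qpow_eq_self_of_ne_zero (hq : q = p ^ r) {a d h k : F} (ha : a ≠ 0) (hh : h ≠ 0)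
    (hk : k ≠ 0) (e1 : a ^ q = d) (e4 : a ^ q ^ (m + 1) = d)
    (e6 : powOneSub q (m + 3) k * a ^ q ^ (m + 3) = d * powOneSub q (m + 3) h)
    (e9 : powOneSub q (2 * m + 3) k * a ^ q ^ (2 * m + 3) = d * powOneSub q (2 * m + 3) h) :
    (k / h) ^ q ^ m = k / h := by
  have ham : a ^ q ^ m = a := qpow_injective hq 1 <| by
    show (a ^ q ^ m) ^ q ^ 1 = a ^ q ^ 1
    rw [qpow_qpow, e4, pow_one, e1]
  have ha3 : a ^ q ^ (m + 3) = a ^ q ^ 3 := by rw [← qpow_qpow, ham]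
  have ha3' : a ^ q ^ (2 * m + 3) = a ^ q ^ 3 := by
    rw [show 2 * m + 3 = m + (m + 3) by ring, ← qpow_qpow, ham, ha3]
  rw [ha3] at e6
  rw [ha3'] at e9
  have hcross : powOneSub q (m + 3) k * powOneSub q (2 * m + 3) h =
      powOneSub q (2 * m + 3) k * powOneSub q (m + 3) h :=
    mul_right_cancel₀ (pow_ne_zero (q ^ 3) ha) <| by
      linear_combination powOneSub q (2 * m + 3) h * e6 - powOneSub q (m + 3) h * e9
  have hT : (k / h) ^ q ^ (2 * m + 3) = (k / h) ^ q ^ (m + 3) := by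
    simp only [powOneSub] at hcross
    rw [div_pow, div_pow, div_eq_div_iff (pow_ne_zero _ hh) (pow_ne_zero _ hh)]
    field_simp at hcross
    linear_combination hcross
  exact qpow_injective hq (m + 3) <| by
    show ((k / h) ^ q ^ m) ^ q ^ (m + 3) = (k / h) ^ q ^ (m + 3)
    rw [qpow_qpow, show m + (m + 3) = 2 * m + 3 by ring, hT]

theorem div_qpow_eq_self_of_norm_eq_neg_one [Fintype F] (hq : q = p ^ r)
    (hcard : Fintype.card F = q ^ (2 * m + 4)) {b h k : F} (hb : b ≠ 0) (hk : k ≠ 0)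
    (hh : h ^ (q ^ (m + 2) + 1) = -1)
    (e2 : b ^ q + powOneSub q (m + 3) k * (b * powOneSub q (m + 3) h) ^ q ^ (m + 3) = 0)
    (e8 : b ^ q ^ (m + 1) +
      powOneSub q (2 * m + 3) k * (b * powOneSub q (2 * m + 3) h) ^ q ^ (2 * m + 3) = 0) :
    (k / h) ^ q ^ m = k / h := by
  have hq0 : q ≠ 0 := hq ▸ pow_ne_zero r (Fact.out : p.Prime).ne_zero
  have hh0 : h ≠ 0 := by rintro rfl; simp [hq0] at hh
  have e2' : b ^ q ^ (m + 1) + (powOneSub q (m + 3) k) ^ q ^ m *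
      (b * powOneSub q (m + 3) h) ^ q ^ (2 * m + 3) = 0 := by
    have := congrArg (· ^ q ^ m) e2
    rwa [add_pow_qpow hq, mul_pow, qpow_qpow, ← pow_mul, ← pow_succ',
      zero_pow (pow_ne_zero _ hq0), show m + 3 + m = 2 * m + 3 by ring] at this
  have hS : powOneSub q (2 * m + 3) k * powOneSub q (2 * m + 3) h ^ q ^ (2 * m + 3) =
      powOneSub q (m + 3) k ^ q ^ m * powOneSub q (m + 3) h ^ q ^ (2 * m + 3) :=
    mul_left_cancel₀ (pow_ne_zero (q ^ (2 * m + 3)) hb) (by linear_combination e8 - e2')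
  have hkey : k * h ^ q ^ (m + 2) = k ^ q ^ m * h ^ q ^ (2 * m + 2) := by
    simp only [powOneSub, div_pow, qpow_qpow] at hS
    rw [show 2 * m + 3 + (2 * m + 3) = 2 * m + 4 + (2 * m + 2) by ring,
      show m + 3 + (2 * m + 3) = 2 * m + 4 + (m + 2) by ring, show m + 3 + m = 2 * m + 3 by ring,
      qpow_add_of_card hcard, qpow_add_of_card hcard] at hS
    field_simp at hS
    linear_combination hS
  have hinv : k / h = -(k * h ^ q ^ (m + 2)) := by
    rw [div_eq_iff hh0]
    linear_combination k * hh
  rw [hinv, neg_pow_qpow hq, mul_pow, qpow_qpow, show m + 2 + m = 2 * m + 2 by ring, ← hkey]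

theorem exists_eq_mul_ringEquiv_of_gammaLEquiv [Fintype F] (hq : q = p ^ r)
    (hcard : Fintype.card F = q ^ (2 * m + 4)) (hm : 2 < m) {h k : F}
    (hh : h ^ (q ^ (m + 2) + 1) = -1) (hk : k ^ (q ^ (m + 2) + 1) = -1)
    (heq : GammaLEquiv (Uspace q (m + 2) h) (Uspace q (m + 2) k)) :
    ∃ (w : F) (ρ : F ≃+* F), w ^ q ^ m = w ∧ w ^ (q ^ (m + 2) + 1) = 1 ∧ k = w * ρ h := by
  obtain ⟨ρ, A, hA, hfe⟩ := exists_psiMap_comp_of_gammaLEquiv heq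
  obtain ⟨e1, e4, e6, e9, e2, e8⟩ := coeff_eqs_of_psiMap_comp hq hcard hm hfe
  have hρh : ρ h ^ (q ^ (m + 2) + 1) = -1 := by rw [← map_pow, hh, map_neg, map_one]
  have hρh0 : ρ h ≠ 0 := by rintro h0; simp [h0] at hρh
  have hk0 : k ≠ 0 := by rintro rfl; simp at hk
  refine ⟨k / ρ h, ρ, ?_, by rw [div_pow, hk, hρh, neg_div_neg_eq, div_one],
    (div_mul_cancel₀ k hρh0).symm⟩
  by_cases ha : A 0 0 = 0
  · have hd : A 1 1 = 0 := by
      rw [← e1, ha, zero_pow (hq ▸ pow_ne_zero r (Fact.out : p.Prime).ne_zero)]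
    have hb : A 0 1 ≠ 0 := fun hb => by
      rw [Matrix.isUnit_iff_isUnit_det, Matrix.det_fin_two, ha, hb, hd] at hA
      simp at hA
    exact div_qpow_eq_self_of_norm_eq_neg_one hq hcard hb hk0 hρh e2 e8
  · exact div_qpow_eq_self_of_ne_zero hq ha hρh0 hk0 e1 e4 e6 e9

end Core

theorem sq_eq_one_of_qpow_eq_self {F : Type*} [Field F] [Fintype F] {q m : ℕ}
    (hcard : Fintype.card F = q ^ (2 * m + 4)) (hm : m % 4 ≠ 0) {w : F} (hw : w ^ q ^ m = w)
    (hw1 : w ^ (q ^ (m + 2) + 1) = 1) : w ^ 2 = 1 := by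
  have hper : ∀ n, Function.IsPeriodicPt (· ^ q) n w ↔ w ^ q ^ n = w := fun n => by
    rw [Function.IsPeriodicPt, Function.IsFixedPt, pow_iterate]
  have hn : w ^ q ^ (2 * m + 4) = w := by simpa using qpow_add_of_card hcard w 0
  have hg : Nat.gcd m (2 * m + 4) ∣ m + 2 := by
    have h4 : Nat.gcd m (2 * m + 4) ∣ 4 := (Nat.dvd_add_right
      (dvd_mul_of_dvd_right (Nat.gcd_dvd_left _ _) 2)).mp (Nat.gcd_dvd_right _ _)
    have hgm := Nat.gcd_dvd_left m (2 * m + 4)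
    have hle := Nat.le_of_dvd (by norm_num) h4
    interval_cases hgi : Nat.gcd m (2 * m + 4)
    all_goals omega
  have := ((hper _).mpr hw).gcd ((hper _).mpr hn) |>.trans_dvd hg
  rw [hper] at this
  rw [← hw1, pow_succ w (q ^ _), this, sq]

section TwistedOrbit

variable {F : Type*} [Field F] [Fintype F]

open Classical in
noncomputable def twistedOrbit (W : ℕ) (h : F) : Finset F :=
  (nthRootsFinset W (1 : F) ×ˢ ({y | ∃ ρ : F ≃+* F, ρ h = y} : Finset F)).image
    fun x => x.1 * x.2

theorem mul_mem_twistedOrbit {W : ℕ} (hW : 0 < W) {w : F} (hw : w ^ W = 1) (ρ : F ≃+* F)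
    (h : F) : w * ρ h ∈ twistedOrbit W h := by
  classical
  exact mem_image.mpr ⟨(w, ρ h), mem_product.mpr ⟨(mem_nthRootsFinset hW _).mpr hw,
    mem_filter.mpr ⟨mem_univ _, ρ, rfl⟩⟩, rfl⟩

theorem mem_twistedOrbit_comm {W : ℕ} (hW : 0 < W) {h k : F} (hk : k ∈ twistedOrbit W h) :
    h ∈ twistedOrbit W k := by
  classical
  obtain ⟨⟨w, y⟩, hwy, rfl⟩ := mem_image.mp hk
  obtain ⟨hw, hy⟩ := mem_product.mp hwy
  obtain ⟨ρ, rfl⟩ := (mem_filter.mp hy).2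
  rw [mem_nthRootsFinset hW] at hw
  have hw0 : ρ.symm w ≠ 0 := (_root_.map_ne_zero _).mpr (by rintro rfl; simp [hW.ne'] at hw)
  convert mul_mem_twistedOrbit hW (w := (ρ.symm w)⁻¹)
    (by rw [inv_pow, ← map_pow, hw, map_one, inv_one]) ρ.symm (w * ρ h) using 1
  rw [map_mul, RingEquiv.symm_apply_apply, inv_mul_cancel_left₀ hw0]

theorem card_twistedOrbit_le {p n : ℕ} [Fact p.Prime] (hcard : Fintype.card F = p ^ n)
    (W : ℕ) (h : F) : #(twistedOrbit W h) ≤ W * n := by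
  classical
  refine card_image_le.trans ?_
  rw [card_product]
  refine Nat.mul_le_mul ?_ (card_ringEquiv_orbit_le hcard h)
  rw [nthRootsFinset_def]
  exact (Multiset.toFinset_card_le _).trans (Polynomial.card_nthRoots W 1)

end TwistedOrbit

theorem exists_pairwise_not_gammaLEquiv {F : Type*} [Field F] [Fintype F] {p q r m W : ℕ}
    [Fact p.Prime] (hq : q = p ^ r) (hqodd : Odd q) (hm : 2 < m)
    (hcard : Fintype.card F = q ^ (2 * m + 4)) (hW : 0 < W)
    (hWroots : ∀ w : F, w ^ q ^ m = w → w ^ (q ^ (m + 2) + 1) = 1 → w ^ W = 1) :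
    ∃ S : Finset F, (∀ h ∈ S, h ^ (q ^ (m + 2) + 1) = -1) ∧
      (∀ h ∈ S, ∀ k ∈ S, h ≠ k →
        ¬GammaLEquiv (Uspace q (m + 2) h) (Uspace q (m + 2) k)) ∧
      (q ^ (m + 2) + 1) / (W * (r * (2 * m + 4))) ≤ #S := by
  classical
  have hcardp : Fintype.card F = p ^ (r * (2 * m + 4)) := by rw [hcard, hq, pow_mul]
  have := charP_of_card_eq_prime_pow hcardp
  set H := nthRootsFinset (q ^ (m + 2) + 1) (-1 : F)
  have hmemH : ∀ h, h ∈ H ↔ h ^ (q ^ (m + 2) + 1) = -1 := fun h =>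
    mem_nthRootsFinset (by omega) _
  have hH : #H = q ^ (m + 2) + 1 := by
    obtain ⟨u, hu⟩ := hqodd.pow (n := m + 2)
    refine card_nthRootsFinset_neg_one ⟨u, ?_⟩
    rw [hcard, show 2 * m + 4 = (m + 2) * 2 by ring, pow_mul, hu]
    ring_nf
    omega
  have hN : ∀ h ∈ H, ∀ k ∈ H, GammaLEquiv (Uspace q (m + 2) h) (Uspace q (m + 2) k) ∨
      GammaLEquiv (Uspace q (m + 2) k) (Uspace q (m + 2) h) ∨ k = h →
      k ∈ twistedOrbit W h := by
    rintro h hh k hk (hR | hR | rfl)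
    · obtain ⟨w, ρ, hw, hw1, rfl⟩ :=
        exists_eq_mul_ringEquiv_of_gammaLEquiv hq hcard hm ((hmemH h).mp hh) ((hmemH k).mp hk) hR
      exact mul_mem_twistedOrbit hW (hWroots w hw hw1) ρ h
    · obtain ⟨w, ρ, hw, hw1, rfl⟩ :=
        exists_eq_mul_ringEquiv_of_gammaLEquiv hq hcard hm ((hmemH k).mp hk) ((hmemH h).mp hh) hR
      exact mem_twistedOrbit_comm hW (mul_mem_twistedOrbit hW (hWroots w hw hw1) ρ k)
    · simpa using mul_mem_twistedOrbit hW (one_pow W) (RingEquiv.refl F) k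
  obtain ⟨S, hSH, hS, hSc⟩ :=
    exists_pairwise_not_rel_of_card_nbhd_le _ _ H hN fun h _ => card_twistedOrbit_le hcardp W h
  exact ⟨S, fun h hh => (hmemH h).mp (hSH hh), hS, hH ▸ hSc⟩

theorem stmt12_general (p r q t : ℕ) (hp : p.Prime) (hpodd : Odd p)
    (hq : q = p ^ r) (ht : 4 < t)
    (F : Type*) [Field F] [Fintype F] (hcard : Fintype.card F = q ^ (2 * t)) :
    (t % 4 ≠ 2 →
      ∃ S : Finset F, (∀ h ∈ S, h ^ (q ^ t + 1) = (-1 : F)) ∧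
        (∀ h ∈ S, ∀ k ∈ S, h ≠ k → ¬ GammaLEquiv (Uspace q t h) (Uspace q t k)) ∧
        (q ^ t + 1) / (4 * r * t) ≤ S.card) ∧
    (t % 4 = 2 →
      ∃ S : Finset F, (∀ h ∈ S, h ^ (q ^ t + 1) = (-1 : F)) ∧
        (∀ h ∈ S, ∀ k ∈ S, h ≠ k → ¬ GammaLEquiv (Uspace q t h) (Uspace q t k)) ∧
        (q ^ t + 1) / (2 * r * t * (q ^ 2 + 1)) ≤ S.card) := by
  have := Fact.mk hp
  obtain ⟨m, rfl⟩ : ∃ m, t = m + 2 := ⟨t - 2, by omega⟩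
  have hcard' : Fintype.card F = q ^ (2 * m + 4) := by rw [hcard]; ring_nf
  have hqodd : Odd q := hq ▸ hpodd.pow
  refine ⟨fun ht4 => ?_, fun ht4 => ?_⟩
  · obtain ⟨S, hS⟩ := exists_pairwise_not_gammaLEquiv (W := 2) hq hqodd (by omega) hcard'
      two_pos fun w hw hw1 => sq_eq_one_of_qpow_eq_self hcard' (by omega) hw hw1
    exact ⟨S, by rwa [show 4 * r * (m + 2) = 2 * (r * (2 * m + 4)) by ring]⟩
  · obtain ⟨S, hS⟩ := exists_pairwise_not_gammaLEquiv (W := q ^ 2 + 1) hq hqodd (by omega)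
      hcard' (by positivity) fun w hw hw1 => by
        rwa [pow_add q m 2, pow_succ, pow_mul, hw, ← pow_succ] at hw1
    exact ⟨S, by
      rwa [show 2 * r * (m + 2) * (q ^ 2 + 1) = (q ^ 2 + 1) * (r * (2 * m + 4)) by ring]⟩

/-- For `q = p^r`, `p` odd prime, `t > 4`: the number of `ΓL(2,q^n)`-equivalence classes of
the family `{U_h : h^{q^t+1} = -1}` is at least `⌊(q^t+1)/(4rt)⌋` if `t ≢ 2 (mod 4)`, and
at least `⌊(q^t+1)/(2rt(q²+1))⌋` if `t ≡ 2 (mod 4)`; i.e. there exist that many pairwise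
inequivalent members. -/
theorem stmt12 (p r q t : ℕ) (hp : p.Prime) (hpodd : Odd p) (hr : 0 < r)
    (hq : q = p ^ r) (ht : 4 < t)
    (F : Type*) [Field F] [Fintype F] (hcard : Fintype.card F = q ^ (2 * t)) :
    (t % 4 ≠ 2 →
      ∃ S : Finset F, (∀ h ∈ S, h ^ (q ^ t + 1) = (-1 : F)) ∧
        (∀ h ∈ S, ∀ k ∈ S, h ≠ k → ¬ GammaLEquiv (Uspace q t h) (Uspace q t k)) ∧
        (q ^ t + 1) / (4 * r * t) ≤ S.card) ∧
    (t % 4 = 2 →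
      ∃ S : Finset F, (∀ h ∈ S, h ^ (q ^ t + 1) = (-1 : F)) ∧
        (∀ h ∈ S, ∀ k ∈ S, h ≠ k → ¬ GammaLEquiv (Uspace q t h) (Uspace q t k)) ∧
        (q ^ t + 1) / (2 * r * t * (q ^ 2 + 1)) ≤ S.card) :=
  stmt12_general p r q t hp hpodd hq ht F hcard
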